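/- arXiv:1810.12275 — 2 statements merged into one kernel-verified Lean document; each statement's English description precedes it below -/
import Mathlib

section
/- The Sierpiński word s is prefix normal with respect to the letter a: for every n ≥ 1 and every factor v of s of length n, the number of occurrences of the letter a in v is at most the number of occurrences of a in the prefix of s of length n. -/
/-- The alphabet is `Bool`, with `true` playing the role of the letter `a` and
`false` the role of the letter `b`.
`sierpinskiApprox n` is the word `s_n`, defined by `s_0 = a` and
`s_{n+1} = s_n b^{3^n} s_n`; it has length `3^n` and is a prefix of `s_{n+1}`. -/
def sierpinskiApprox : ℕ → List Bool
  | 0 => [true]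
  | n + 1 =>
      sierpinskiApprox n ++ List.replicate (3 ^ n) false ++ sierpinskiApprox n

/-- The Sierpiński word `s = lim_{n → ∞} s_n`. -/
def sierpinski (i : ℕ) : Bool := (sierpinskiApprox (i + 1)).getD i false

/-- `v` is a (finite) factor of the infinite word `w`. -/
def IsFactor {A : Type*} (w : ℕ → A) (v : List A) : Prop :=
  ∃ i : ℕ, v = (List.range v.length).map (fun j => w (i + j))

/-! Writing `A n` for the number of `a`'s in the prefix of length `n`, a factor of length `n`
starting at position `i` contains `A (i + n) - A i` letters `a`, so the claim is the
subadditivity `A (i + n) ≤ A i + A n`. Since `s` is the fixed point of `a ↦ aba, b ↦ bbb`,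
the `a`'s of the prefix of length `n` sit at the positions `3j` and `3j + 2` with `s j = a`, whence
`A n = A ⌊n/3⌋ + A ⌈n/3⌉`. Subadditivity follows from this recurrence by strong induction on
`x + y`, once it is strengthened by the bound
`A (x + y + 1) + A (x + y + 2) ≤ A x + A (x + 1) + A y + A (y + 1)`,
which is exactly what the case `x ≡ y ≡ 2 (mod 3)` requires. -/

section TernaryRecurrence

variable {f : ℕ → ℕ}

theorem Monotone.map_add_le_and_map_add_one_add_map_add_two_le (hf : Monotone f)
    (hrec : ∀ n, f n = f (n / 3) + f ((n + 2) / 3)) (x y : ℕ) :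
    f (x + y) ≤ f x + f y ∧
      f (x + y + 1) + f (x + y + 2) ≤ f x + f (x + 1) + f y + f (y + 1) := by
  have hdigit : ∀ m k n, n = 3 * m + k → f n = f (m + k / 3) + f (m + (k + 2) / 3) := by
    rintro m k n rfl
    rw [hrec]
    congr 2 <;> omega
  induction h : x + y using Nat.strong_induction_on generalizing x y with
  | _ N ih =>
  subst h
  -- `ih` is needed below at sums up to `(x + y) / 3 + 2`, which is smaller than `x + y` only
  -- from `x + y = 4` on.
  by_cases hsmall : x + y ≤ 3
  · have h0 := hdigit 0 0 0 rfl
    have h2 := hdigit 0 2 2 rfl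
    have h3 := hdigit 0 3 3 rfl
    have h4 := hdigit 0 4 4 rfl
    have h5 := hdigit 1 2 5 rfl
    norm_num at h0 h2 h3 h4 h5
    have hx : x ≤ 3 := by omega
    have hy : y ≤ 3 := by omega
    interval_cases x <;> interval_cases y <;> simp only [Nat.reduceAdd] <;> omega
  obtain ⟨a, r, hr, hx⟩ : ∃ a r, r < 3 ∧ x = 3 * a + r := ⟨x / 3, x % 3, by omega, by omega⟩
  obtain ⟨b, t, ht, hy⟩ : ∃ b t, t < 3 ∧ y = 3 * b + t := ⟨y / 3, y % 3, by omega, by omega⟩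
  have ⟨hab, hpair⟩ := ih (a + b) (by omega) a b rfl
  have hab₁ := (ih (a + b + 1) (by omega) a (b + 1) (by omega)).1
  have ha₁b := (ih (a + b + 1) (by omega) (a + 1) b (by omega)).1
  have ha₁b₁ := (ih (a + b + 2) (by omega) (a + 1) (b + 1) (by omega)).1
  have hmc : f (a + b + 1) ≤ f (a + b + 2) := hf (Nat.le_succ _)
  have ex₀ := hdigit a r x hx
  have ex₁ := hdigit a (r + 1) (x + 1) (by omega)
  have ey₀ := hdigit b t y hy
  have ey₁ := hdigit b (t + 1) (y + 1) (by omega)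
  have es₀ := hdigit (a + b) (r + t) (x + y) (by omega)
  have es₁ := hdigit (a + b) (r + t + 1) (x + y + 1) (by omega)
  have es₂ := hdigit (a + b) (r + t + 2) (x + y + 2) (by omega)
  interval_cases r <;> interval_cases t <;>
    simp only [Nat.reduceAdd, Nat.reduceDiv, Nat.add_zero] at ex₀ ex₁ ey₀ ey₁ es₀ es₁ es₂ <;>
    omega

theorem Monotone.map_add_le_of_div_three (hf : Monotone f)
    (hrec : ∀ n, f n = f (n / 3) + f ((n + 2) / 3)) (x y : ℕ) : f (x + y) ≤ f x + f y :=
  (hf.map_add_le_and_map_add_one_add_map_add_two_le hrec x y).1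

end TernaryRecurrence

def sierpinskiSubst : Bool → List Bool
  | true => [true, false, true]
  | false => [false, false, false]

theorem sierpinskiApprox_succ (n : ℕ) :
    sierpinskiApprox (n + 1) = (sierpinskiApprox n).flatMap sierpinskiSubst := by
  induction n with
  | zero => rfl
  | succ n ih =>
    rw [sierpinskiApprox.eq_2 (n + 1)]
    conv_rhs => rw [sierpinskiApprox.eq_2 n]
    rw [List.flatMap_append, List.flatMap_append, ← ih, List.flatMap_replicate, sierpinskiSubst,
      show [false, false, false] = List.replicate 3 false from rfl,
      List.flatten_replicate_replicate, pow_succ]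

theorem getD_flatMap_sierpinskiSubst (w : List Bool) (m : ℕ) {r : ℕ} (hr : r < 3) :
    (w.flatMap sierpinskiSubst).getD (3 * m + r) false =
      (sierpinskiSubst (w.getD m false)).getD r false := by
  induction w generalizing m with
  | nil => interval_cases r <;> rfl
  | cons c w ih =>
    have hc : (sierpinskiSubst c).length = 3 := by cases c <;> rfl
    rw [List.flatMap_cons]
    cases m with
    | zero => rw [Nat.mul_zero, Nat.zero_add, List.getD_append _ _ _ _ (by omega)]; rfl
    | succ m =>
      rw [List.getD_append_right _ _ _ _ (by omega), hc,
        show 3 * (m + 1) + r - 3 = 3 * m + r by omega, ih]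
      rfl

theorem length_sierpinskiApprox (n : ℕ) : (sierpinskiApprox n).length = 3 ^ n := by
  induction n with
  | zero => rfl
  | succ n ih =>
    rw [sierpinskiApprox, List.length_append, List.length_append, List.length_replicate, ih,
      pow_succ]
    ring

theorem sierpinskiApprox_prefix_of_le {m n : ℕ} (h : m ≤ n) :
    sierpinskiApprox m <+: sierpinskiApprox n := by
  induction h with
  | refl => exact List.prefix_refl _
  | step _ ih =>
    rw [sierpinskiApprox, List.append_assoc]
    exact ih.trans (List.prefix_append _ _)

theorem getD_sierpinskiApprox_of_le {m n i : ℕ} (hmn : m ≤ n) (hi : i < 3 ^ m) :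
    (sierpinskiApprox m).getD i false = (sierpinskiApprox n).getD i false := by
  obtain ⟨t, ht⟩ := sierpinskiApprox_prefix_of_le hmn
  rw [← ht, List.getD_append _ _ _ _ (by rwa [length_sierpinskiApprox])]

theorem getD_sierpinskiApprox {n i : ℕ} (hi : i < 3 ^ n) :
    (sierpinskiApprox n).getD i false = sierpinski i := by
  have hi' : i < 3 ^ (i + 1) := (Nat.lt_pow_self (by norm_num)).trans
    (Nat.pow_lt_pow_right (by norm_num) (Nat.lt_succ_self i))
  rw [sierpinski, getD_sierpinskiApprox_of_le (le_max_left n (i + 1)) hi,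
    getD_sierpinskiApprox_of_le (le_max_right n (i + 1)) hi']

theorem sierpinski_three_mul_add (m : ℕ) {r : ℕ} (hr : r < 3) :
    sierpinski (3 * m + r) = (sierpinskiSubst (sierpinski m)).getD r false := by
  have hm : m < 3 ^ m := Nat.lt_pow_self (by norm_num)
  rw [← getD_sierpinskiApprox (n := m + 1) (by rw [pow_succ]; omega), sierpinskiApprox_succ,
    getD_flatMap_sierpinskiSubst _ _ hr, getD_sierpinskiApprox hm]

theorem sierpinski_three_mul (m : ℕ) : sierpinski (3 * m) = sierpinski m := by
  rw [← Nat.add_zero (3 * m), sierpinski_three_mul_add m (by norm_num)]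
  cases sierpinski m <;> rfl

theorem sierpinski_three_mul_add_one (m : ℕ) : sierpinski (3 * m + 1) = false := by
  rw [sierpinski_three_mul_add m (by norm_num)]
  cases sierpinski m <;> rfl

theorem sierpinski_three_mul_add_two (m : ℕ) : sierpinski (3 * m + 2) = sierpinski m := by
  rw [sierpinski_three_mul_add m (by norm_num)]
  cases sierpinski m <;> rfl

def sierpinskiCount (n : ℕ) : ℕ := ((List.range n).map sierpinski).count true

theorem count_factor_add_sierpinskiCount (i n : ℕ) :
    ((List.range n).map fun j => sierpinski (i + j)).count true + sierpinskiCount i =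
      sierpinskiCount (i + n) := by
  rw [sierpinskiCount, sierpinskiCount, List.range_add, List.map_append, List.count_append,
    List.map_map, Nat.add_comm]
  rfl

theorem sierpinskiCount_succ (n : ℕ) :
    sierpinskiCount (n + 1) = sierpinskiCount n + if sierpinski n then 1 else 0 := by
  rw [← count_factor_add_sierpinskiCount]
  cases h : sierpinski n <;> simp [h, Nat.add_comm]

theorem sierpinskiCount_monotone : Monotone sierpinskiCount :=
  monotone_nat_of_le_succ fun n => by rw [sierpinskiCount_succ]; omega

theorem sierpinskiCount_three_mul (m : ℕ) : sierpinskiCount (3 * m) = 2 * sierpinskiCount m := by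
  induction m with
  | zero => rfl
  | succ m ih =>
    rw [show 3 * (m + 1) = 3 * m + 2 + 1 by ring, sierpinskiCount_succ, sierpinskiCount_succ,
      sierpinskiCount_succ, ih, sierpinski_three_mul, sierpinski_three_mul_add_one,
      sierpinski_three_mul_add_two, sierpinskiCount_succ]
    simp only [Bool.false_eq_true, if_false]
    split <;> omega

theorem sierpinskiCount_eq_div_three (n : ℕ) :
    sierpinskiCount n = sierpinskiCount (n / 3) + sierpinskiCount ((n + 2) / 3) := by
  obtain ⟨m, r, hr, rfl⟩ : ∃ m r, r < 3 ∧ n = 3 * m + r :=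
    ⟨n / 3, n % 3, Nat.mod_lt _ (by norm_num), (Nat.div_add_mod n 3).symm⟩
  have hA : sierpinskiCount (3 * m + 1) = sierpinskiCount m + sierpinskiCount (m + 1) := by
    rw [sierpinskiCount_succ, sierpinskiCount_three_mul, sierpinski_three_mul,
      sierpinskiCount_succ]
    ring
  interval_cases r
  · rw [show (3 * m + 0 + 2) / 3 = m by omega, show (3 * m + 0) / 3 = m by omega, Nat.add_zero,
      sierpinskiCount_three_mul, Nat.two_mul]
  · rw [show (3 * m + 1 + 2) / 3 = m + 1 by omega, show (3 * m + 1) / 3 = m by omega, hA]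
  · rw [show (3 * m + 2 + 2) / 3 = m + 1 by omega, show (3 * m + 2) / 3 = m by omega,
      sierpinskiCount_succ, sierpinski_three_mul_add_one, hA]
    rfl

/-- The Sierpiński word is prefix normal with respect to the letter `a`:
every factor of length `n` contains at most as many `a`'s as the prefix of
length `n`. -/
theorem sierpinski_prefix_normal :
    ∀ n : ℕ, 1 ≤ n → ∀ v : List Bool, IsFactor sierpinski v → v.length = n →
      v.count true ≤ ((List.range n).map (fun j => sierpinski j)).count true := by
  rintro n - v ⟨i, hv⟩ rfl
  have hwindow := count_factor_add_sierpinskiCount i v.length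
  have hsub := sierpinskiCount_monotone.map_add_le_of_div_three sierpinskiCount_eq_div_three i
    v.length
  rw [← hv] at hwindow
  change v.count true ≤ sierpinskiCount v.length
  omega
end

section
/- For every n ≥ 1, the abelian complexity a(n) of the Sierpiński word s equals 1 plus the number of occurrences of the letter a in the prefix of s of length n. -/
/-- The Parikh vector of a finite word: the number of occurrences of each letter. -/
def parikh {A : Type*} [DecidableEq A] (u : List A) : A → ℕ := fun a => u.count a

/-- The abelian complexity of an infinite word `w` : the number of distinct
Parikh vectors of factors of `w` of length `n`. -/
noncomputable def abelianComplexity {A : Type*} [DecidableEq A] (w : ℕ → A) (n : ℕ) : ℕ :=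
  Set.ncard {p : A → ℕ | ∃ i : ℕ, p = parikh ((List.range n).map (fun j => w (i + j)))}

/-- read binary digits of `n` as base-3 digits -/
def gS (n : ℕ) : ℕ :=
  if h : n = 0 then 0 else 3 * gS (n / 2) + n % 2
decreasing_by exact Nat.div_lt_self (Nat.pos_of_ne_zero h) one_lt_two

lemma gS_eq (n : ℕ) : gS n = 3 * gS (n / 2) + n % 2 := by
  rw [gS]
  split
  · subst ‹n = 0›; rw [gS]; simp
  · rfl

lemma gS_zero : gS 0 = 0 := by rw [gS]; simp

lemma gS_succ_ge : ∀ n, gS n + 1 ≤ gS (n + 1) := by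
  intro n
  induction n using Nat.strong_induction_on with
  | _ n ih =>
    rcases Nat.even_or_odd n with ⟨a, ha⟩ | ⟨a, ha⟩
    · subst ha
      rw [gS_eq (a + a), gS_eq (a + a + 1)]
      have h1 : (a + a) / 2 = a := by omega
      have h2 : (a + a + 1) / 2 = a := by omega
      rw [h1, h2]; omega
    · subst ha
      rw [gS_eq (2 * a + 1), gS_eq (2 * a + 1 + 1)]
      have h1 : (2 * a + 1) / 2 = a := by omega
      have h2 : (2 * a + 1 + 1) / 2 = a + 1 := by omega
      rw [h1, h2]
      have := ih a (by omega)
      omega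

lemma gS_mono : Monotone gS := monotone_nat_of_le_succ (fun n => by have := gS_succ_ge n; omega)

lemma gS_superadd : ∀ x y, gS x + gS y ≤ gS (x + y) := by
  have key : ∀ s x y, x + y = s → gS x + gS y ≤ gS (x + y) := by
    intro s
    induction s using Nat.strong_induction_on with
    | _ s ih =>
      intro x y hs
      rcases Nat.eq_zero_or_pos x with hx | hx
      · subst hx; simp [gS_zero]
      rcases Nat.eq_zero_or_pos y with hy | hy
      · subst hy; simp [gS_zero]
      rw [gS_eq x, gS_eq y, gS_eq (x + y)]
      have hlt : x / 2 + y / 2 < s := by omega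
      have hIH := ih (x / 2 + y / 2) hlt (x / 2) (y / 2) rfl
      rcases Nat.lt_or_ge (x % 2 + y % 2) 2 with hr | hr
      · have h1 : (x + y) / 2 = x / 2 + y / 2 := by omega
        have h2 : (x + y) % 2 = x % 2 + y % 2 := by omega
        rw [h1, h2]; omega
      · have hr1 : x % 2 = 1 := by omega
        have hr2 : y % 2 = 1 := by omega
        have h1 : (x + y) / 2 = x / 2 + y / 2 + 1 := by omega
        have h2 : (x + y) % 2 = 0 := by omega
        rw [h1, h2]
        have := gS_succ_ge (x / 2 + y / 2)
        omega
  exact fun x y => key (x + y) x y rfl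

/-- `cantor n = true` iff all base-3 digits of `n` lie in `{0,2}` -/
def cantor (n : ℕ) : Bool :=
  if h : n = 0 then true else (decide (n % 3 ≠ 1)) && cantor (n / 3)
decreasing_by exact Nat.div_lt_self (Nat.pos_of_ne_zero h) (by norm_num)

lemma cantor_zero : cantor 0 = true := by rw [cantor]; simp

lemma cantor_eq (n : ℕ) : cantor n = ((decide (n % 3 ≠ 1)) && cantor (n / 3)) := by
  rw [cantor]
  split
  · subst ‹n = 0›; simp [cantor_zero]
  · rfl

lemma cantor_two_gS : ∀ k, cantor (2 * gS k) = true := by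
  intro k
  induction k using Nat.strong_induction_on with
  | _ k ih =>
    rcases Nat.eq_zero_or_pos k with hk | hk
    · subst hk; simp [gS_zero, cantor_zero]
    rw [gS_eq k, cantor_eq]
    have h1 : 2 * (3 * gS (k / 2) + k % 2) % 3 = 2 * (k % 2) % 3 := by omega
    have h2 : 2 * (3 * gS (k / 2) + k % 2) / 3 = 2 * gS (k / 2) := by omega
    rw [h1, h2, ih (k / 2) (by omega)]
    have : k % 2 = 0 ∨ k % 2 = 1 := by omega
    rcases this with h | h <;> simp [h]

lemma cantor_exists : ∀ n, cantor n = true → ∃ k, n = 2 * gS k := by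
  intro n
  induction n using Nat.strong_induction_on with
  | _ n ih =>
    intro hn
    rcases Nat.eq_zero_or_pos n with h0 | h0
    · exact ⟨0, by simp [h0, gS_zero]⟩
    rw [cantor_eq] at hn
    simp only [Bool.and_eq_true, decide_eq_true_eq] at hn
    obtain ⟨hr, hc⟩ := hn
    obtain ⟨k', hk'⟩ := ih (n / 3) (Nat.div_lt_self h0 (by norm_num)) hc
    have hr2 : n % 3 = 0 ∨ n % 3 = 2 := by omega
    rcases hr2 with h | h
    · refine ⟨2 * k', ?_⟩
      rw [gS_eq (2 * k')]
      have : (2 * k') / 2 = k' := by omega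
      rw [this]; omega
    · refine ⟨2 * k' + 1, ?_⟩
      rw [gS_eq (2 * k' + 1)]
      have : (2 * k' + 1) / 2 = k' := by omega
      rw [this]; omega

lemma sierpinskiApprox_length : ∀ n, (sierpinskiApprox n).length = 3 ^ n := by
  intro n
  induction n with
  | zero => rfl
  | succ n ih => simp [sierpinskiApprox, ih, pow_succ]; ring

lemma cantor_mid : ∀ m i, 3 ^ m ≤ i → i < 2 * 3 ^ m → cantor i = false := by
  intro m
  induction m with
  | zero =>
    intro i h1 h2
    have : i = 1 := by simpa using (by omega : i = 1)
    subst this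
    rw [cantor_eq]; norm_num
  | succ m ih =>
    intro i h1 h2
    have hp : (0:ℕ) < 3 ^ m := Nat.pow_pos (by norm_num)
    rw [cantor_eq]
    have hd1 : 3 ^ m ≤ i / 3 := by
      rw [Nat.le_div_iff_mul_le (by norm_num)]
      calc 3 ^ m * 3 = 3 ^ (m + 1) := by ring
        _ ≤ i := h1
    have hd2 : i / 3 < 2 * 3 ^ m := by
      rw [Nat.div_lt_iff_lt_mul (by norm_num)]
      calc i < 2 * 3 ^ (m + 1) := h2
        _ = 2 * 3 ^ m * 3 := by ring
    rw [ih (i / 3) hd1 hd2]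
    simp

lemma cantor_high : ∀ m i, 2 * 3 ^ m ≤ i → i < 3 ^ (m + 1) → cantor i = cantor (i - 2 * 3 ^ m) := by
  intro m
  induction m with
  | zero =>
    intro i h1 h2
    have : i = 2 := by norm_num at h1 h2 ⊢; omega
    subst this
    rw [cantor_eq]
    norm_num [cantor_zero]
  | succ m ih =>
    intro i h1 h2
    set j := i - 2 * 3 ^ (m + 1) with hj
    have hij : i = 3 * (2 * 3 ^ m) + j := by
      have : 2 * 3 ^ (m + 1) = 3 * (2 * 3 ^ m) := by ring
      omega
    have hjlt : j < 3 ^ (m + 1) := by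
      have : 3 ^ (m + 2) = 3 * (2 * 3 ^ m) + 3 ^ (m+1) := by ring
      omega
    rw [cantor_eq i, cantor_eq j]
    have hmod : i % 3 = j % 3 := by omega
    have hdiv : i / 3 = 2 * 3 ^ m + j / 3 := by omega
    rw [hmod, hdiv]
    have hjd : j / 3 < 3 ^ m := by
      rw [Nat.div_lt_iff_lt_mul (by norm_num)]
      calc j < 3 ^ (m + 1) := hjlt
        _ = 3 ^ m * 3 := by ring
    have := ih (2 * 3 ^ m + j / 3) (by omega) (by
      have : (3:ℕ) ^ (m + 1) = 3 * 3 ^ m := by ring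
      omega)
    rw [show 2 * 3 ^ m + j / 3 - 2 * 3 ^ m = j / 3 by omega] at this
    rw [this]

lemma approx_getD : ∀ m i, i < 3 ^ m → (sierpinskiApprox m).getD i false = cantor i := by
  intro m
  induction m with
  | zero =>
    intro i hi
    interval_cases i
    simp [sierpinskiApprox, cantor_zero]
  | succ m ih =>
    intro i hi
    have hlen : (sierpinskiApprox m).length = 3 ^ m := sierpinskiApprox_length m
    show ((sierpinskiApprox m ++ List.replicate (3 ^ m) false) ++ sierpinskiApprox m).getD i false = cantor i
    rcases Nat.lt_or_ge i (3 ^ m) with h1 | h1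
    · rw [List.getD_append _ _ _ _ (by simp [hlen]; omega),
        List.getD_append _ _ _ _ (by omega)]
      exact ih i h1
    rcases Nat.lt_or_ge i (2 * 3 ^ m) with h2 | h2
    · rw [List.getD_append _ _ _ _ (by simp [hlen]; omega),
        List.getD_append_right _ _ _ _ (by omega)]
      rw [show ∀ k, (List.replicate (3 ^ m) false).getD k false = false from fun k => by unfold List.getD; simp]
      exact (cantor_mid m i h1 h2).symm
    · rw [List.getD_append_right _ _ _ _ (by simp [hlen]; omega)]
      have hl2 : (sierpinskiApprox m ++ List.replicate (3 ^ m) false).length = 2 * 3 ^ m := by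
        simp [hlen]; omega
      rw [hl2, ih (i - 2 * 3 ^ m) (by
        have : (3:ℕ) ^ (m + 1) = 3 * 3 ^ m := by ring
        omega)]
      exact (cantor_high m i h2 hi).symm

lemma sierpinski_eq_cantor (i : ℕ) : sierpinski i = cantor i := by
  have hi : i < 3 ^ (i + 1) := by
    have := (Nat.lt_pow_self (by norm_num) : i < 3 ^ i)
    have h2 : (3:ℕ) ^ i ≤ 3 ^ (i+1) := Nat.pow_le_pow_right (by norm_num) (by omega)
    omega
  exact approx_getD (i + 1) i hi

lemma sierpinski_two_gS (k : ℕ) : sierpinski (2 * gS k) = true := by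
  rw [sierpinski_eq_cantor]; exact cantor_two_gS k

lemma sierpinski_exists (n : ℕ) (h : sierpinski n = true) : ∃ k, n = 2 * gS k := by
  rw [sierpinski_eq_cantor] at h; exact cantor_exists n h

lemma sierpinski_mid (m i : ℕ) (h1 : 3 ^ m ≤ i) (h2 : i < 2 * 3 ^ m) : sierpinski i = false := by
  rw [sierpinski_eq_cantor]; exact cantor_mid m i h1 h2

def AC (x : ℕ) : ℕ := ((List.range x).map sierpinski).count true

def FC (i n : ℕ) : ℕ := ((List.range n).map (fun j => sierpinski (i + j))).count true

lemma AC_succ (x : ℕ) : AC (x + 1) = AC x + (if sierpinski x then 1 else 0) := by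
  unfold AC
  rw [List.range_succ]
  cases h : sierpinski x <;> simp [List.count_append, h]

lemma two_gS_AC : ∀ x, x ≤ 2 * gS (AC x) := by
  intro x
  induction x with
  | zero => omega
  | succ x ih =>
    rw [AC_succ]
    cases hx : sierpinski x with
    | false =>
      simp only [hx, Bool.false_eq_true, if_false, Nat.add_zero]
      rcases Nat.lt_or_ge x (2 * gS (AC x)) with h | h
      · omega
      · exfalso
        have hxe : x = 2 * gS (AC x) := by omega
        rw [hxe, sierpinski_two_gS] at hx
        exact Bool.noConfusion hx
    | true =>
      simp only [if_true]
      have := gS_succ_ge (AC x)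
      have h2 : gS (AC x) + 1 ≤ gS (AC x + 1) := this
      omega

lemma AC_le : ∀ x k, x ≤ 2 * gS k → AC x ≤ k := by
  intro x
  induction x with
  | zero => intro k _; simp [AC]
  | succ x ih =>
    intro k hk
    rw [AC_succ]
    cases hx : sierpinski x with
    | false =>
      simp only [hx, Bool.false_eq_true, if_false, Nat.add_zero]
      exact ih k (by omega)
    | true =>
      simp only [if_true]
      obtain ⟨j, hj⟩ := sierpinski_exists x hx
      have hjk : j < k := by
        by_contra hc
        have := gS_mono (by omega : k ≤ j)
        omega
      have := ih j (by omega)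
      omega

lemma AC_subadd (x y : ℕ) : AC (x + y) ≤ AC x + AC y := by
  apply AC_le
  have h1 := two_gS_AC x
  have h2 := two_gS_AC y
  have h3 := gS_superadd (AC x) (AC y)
  omega

lemma AC_add (i n : ℕ) : AC (i + n) = AC i + FC i n := by
  unfold AC FC
  rw [List.range_add, List.map_append, List.count_append, List.map_map]
  rfl

lemma FC_zero_left (n : ℕ) : FC 0 n = AC n := by
  have := AC_add 0 n
  simpa [AC] using this.symm

lemma FC_le (i n : ℕ) : FC i n ≤ AC n := by
  have h1 := AC_add i n
  have h2 := AC_subadd i n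
  omega

lemma FC_shift (i n : ℕ) :
    FC (i + 1) n + (if sierpinski i then 1 else 0) = FC i n + (if sierpinski (i + n) then 1 else 0) := by
  have h1 : AC (i + n + 1) = AC i + FC i n + (if sierpinski (i + n) then 1 else 0) := by
    rw [AC_succ, AC_add]
  have h2 : AC (i + 1 + n) = AC i + (if sierpinski i then 1 else 0) + FC (i + 1) n := by
    rw [AC_add, AC_succ]
  rw [show i + 1 + n = i + n + 1 by omega] at h2
  by_cases ha : sierpinski i = true <;> by_cases hb : sierpinski (i + n) = true <;>
    simp only [ha, hb, if_true, if_false] at h1 h2 ⊢ <;> omega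

lemma FC_all_zero (n : ℕ) : FC (3 ^ n) n = 0 := by
  unfold FC
  rw [List.count_eq_zero]
  simp only [List.mem_map, List.mem_range, not_exists]
  rintro j ⟨hj, hs⟩
  have hn : n ≤ 3 ^ n := (Nat.lt_pow_self (by norm_num) : n < 3 ^ n).le
  rw [sierpinski_mid n (3 ^ n + j) (by omega) (by omega)] at hs
  exact Bool.noConfusion hs

lemma FC_ivt (n : ℕ) : ∀ d v, FC d n ≤ v → v ≤ FC 0 n → ∃ i, FC i n = v := by
  intro d
  induction d with
  | zero => intro v h1 h2; exact ⟨0, by omega⟩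
  | succ d ih =>
    intro v h1 h2
    rcases le_or_gt (FC d n) v with h | h
    · exact ih v h h2
    · refine ⟨d + 1, ?_⟩
      have := FC_shift d n
      cases hx : sierpinski d <;> cases hy : sierpinski (d + n) <;>
        simp [hx, hy] at this <;> omega

lemma FC_surj (n v : ℕ) (hv : v ≤ AC n) : ∃ i, FC i n = v := by
  apply FC_ivt n (3 ^ n) v
  · rw [FC_all_zero]; omega
  · rw [FC_zero_left]; exact hv

lemma count_true_false (l : List Bool) : l.count true + l.count false = l.length := by
  induction l with
  | nil => rfl
  | cons h t ih => cases h <;> simp [List.count_cons] <;> omega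

/-- For every `n ≥ 1`, the abelian complexity of the Sierpiński word equals
`1` plus the number of `a`'s in the prefix of length `n`. -/
theorem sierpinski_abelian_complexity_eq :
    ∀ n : ℕ, 1 ≤ n →
      abelianComplexity sierpinski n =
        1 + ((List.range n).map (fun j => sierpinski j)).count true := by
  intro n _
  have hAC : ((List.range n).map (fun j => sierpinski j)).count true = AC n := rfl
  rw [hAC]
  unfold abelianComplexity
  have hpar : ∀ i : ℕ, parikh ((List.range n).map (fun j => sierpinski (i + j)))
      = fun b => if b then FC i n else n - FC i n := by
    intro i
    funext b
    cases b
    · show (_ : List Bool).count false = n - FC i n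
      have h := count_true_false ((List.range n).map (fun j => sierpinski (i + j)))
      simp only [List.length_map, List.length_range] at h
      unfold FC
      omega
    · rfl
  have hset : {p : Bool → ℕ | ∃ i : ℕ, p = parikh ((List.range n).map (fun j => sierpinski (i + j)))}
      = (fun v => fun b : Bool => if b then v else n - v) '' (Set.Iic (AC n)) := by
    ext p
    constructor
    · rintro ⟨i, rfl⟩
      exact ⟨FC i n, FC_le i n, (hpar i).symm⟩
    · rintro ⟨v, hv, rfl⟩
      obtain ⟨i, hi⟩ := FC_surj n v hv
      exact ⟨i, by rw [hpar i, hi]⟩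
  rw [hset]
  rw [Set.ncard_image_of_injective _ (fun v w hvw => by
    have := congrFun hvw true
    simpa using this)]
  rw [← Finset.coe_Iic, Set.ncard_coe_finset, Nat.card_Iic]
  omega
end
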